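/- arXiv:2003.10332 — 7 statements merged into one kernel-verified Lean document; each statement's English description precedes it below -/
import Mathlib

section
/- Let X₁ and X₂ be n×n symmetric positive semidefinite real matrices with X₁ ≥ X₂. Then g_{θ,W}(X₁) ≥ g_{θ,W}(X₂) ≥ Q, i.e. the modified Riccati operator is monotone in X and its values dominate Q. (Proposition 1, item 1.) -/
open Matrix

/-- The modified Riccati operator
`g_{θ,W}(X) = A X Aᵀ + Q − θ A X Cᵀ (C X Cᵀ + W)⁻¹ C X Aᵀ`. -/
noncomputable def gRic {n m : ℕ} (A Q : Matrix (Fin n) (Fin n) ℝ)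
    (C : Matrix (Fin m) (Fin n) ℝ) (W : Matrix (Fin m) (Fin m) ℝ) (θ : ℝ)
    (X : Matrix (Fin n) (Fin n) ℝ) : Matrix (Fin n) (Fin n) ℝ :=
  A * X * Aᵀ + Q - θ • (A * X * Cᵀ * (C * X * Cᵀ + W)⁻¹ * (C * X * Aᵀ))

/-!
For a gain `K` put `φ_K(X) = (1 - θ) A X Aᵀ + θ ((A + K C) X (A + K C)ᵀ + K W Kᵀ) + Q`.
Completing the square in `K` gives `φ_K(X) = g_{θ,W}(X) + θ (K + L_X) S_X (K + L_X)ᵀ` with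
`S_X = C X Cᵀ + W` and the Kalman gain `L_X = A X Cᵀ S_X⁻¹`, so `g_{θ,W}(X) = min_K φ_K(X)`,
attained at `K = -L_X`. Each `φ_K` is affine in `X` with a positive semidefinite linear part and
`φ_K(X) ≥ Q`, so the pointwise minimum inherits monotonicity and the lower bound `Q`:
`g(X₁) = φ_{-L_{X₁}}(X₁) ≥ φ_{-L_{X₁}}(X₂) ≥ g(X₂)`.
-/

lemma Matrix.PosSemidef.mul_mul_transpose_same {ι κ : Type*} [Fintype ι] [Finite κ]
    {X : Matrix ι ι ℝ} (hX : X.PosSemidef) (B : Matrix κ ι ℝ) : (B * X * Bᵀ).PosSemidef :=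
  hX.mul_mul_conjTranspose_same B

lemma Matrix.add_mul_inv_mul_mul_transpose {ι κ R : Type*} [Fintype κ] [DecidableEq κ]
    [CommRing R] {S : Matrix κ κ R} (hS : Sᵀ = S) (hdet : IsUnit S.det) (K M : Matrix ι κ R) :
    (K + M * S⁻¹) * S * (K + M * S⁻¹)ᵀ = K * S * Kᵀ + K * Mᵀ + M * Kᵀ + M * S⁻¹ * Mᵀ := by
  rw [transpose_add, transpose_mul, transpose_nonsing_inv, hS]
  simp only [Matrix.add_mul, Matrix.mul_add, Matrix.mul_assoc,
    nonsing_inv_mul_cancel_left _ _ hdet, mul_nonsing_inv_cancel_left _ _ hdet]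
  abel

lemma Matrix.posDef_mul_mul_transpose_add {ι κ : Type*} [Fintype ι] [Fintype κ]
    {X : Matrix ι ι ℝ} (hX : X.PosSemidef) (C : Matrix κ ι ℝ) {W : Matrix κ κ ℝ}
    (hW : W.PosDef) : (C * X * Cᵀ + W).PosDef :=
  hW.posSemidef_add (hX.mul_mul_transpose_same C)

section Riccati

variable {n m : ℕ} (A Q : Matrix (Fin n) (Fin n) ℝ) (C : Matrix (Fin m) (Fin n) ℝ)
  (W : Matrix (Fin m) (Fin m) ℝ) (θ : ℝ)

noncomputable def phiRic (K : Matrix (Fin n) (Fin m) ℝ) (X : Matrix (Fin n) (Fin n) ℝ) :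
    Matrix (Fin n) (Fin n) ℝ :=
  (1 - θ) • (A * X * Aᵀ) + θ • ((A + K * C) * X * (A + K * C)ᵀ + K * W * Kᵀ) + Q

noncomputable def kalmanGain (X : Matrix (Fin n) (Fin n) ℝ) : Matrix (Fin n) (Fin m) ℝ :=
  A * X * Cᵀ * (C * X * Cᵀ + W)⁻¹

lemma phiRic_eq_gRic_add (K : Matrix (Fin n) (Fin m) ℝ) (X : Matrix (Fin n) (Fin n) ℝ)
    (hX : Xᵀ = X) (hW : Wᵀ = W) (hdet : IsUnit (C * X * Cᵀ + W).det) :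
    phiRic A Q C W θ K X = gRic A Q C W θ X +
      θ • ((K + kalmanGain A C W X) * (C * X * Cᵀ + W) * (K + kalmanGain A C W X)ᵀ) := by
  have hS : (C * X * Cᵀ + W)ᵀ = C * X * Cᵀ + W := by
    rw [transpose_add, hW, transpose_mul, transpose_mul, transpose_transpose, hX,
      Matrix.mul_assoc]
  have hM : (A * X * Cᵀ)ᵀ = C * X * Aᵀ := by
    rw [transpose_mul, transpose_mul, transpose_transpose, hX, Matrix.mul_assoc]
  rw [kalmanGain, add_mul_inv_mul_mul_transpose hS hdet, hM, phiRic, gRic]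
  simp only [transpose_add, transpose_mul, Matrix.add_mul, Matrix.mul_add, Matrix.mul_assoc,
    smul_add, sub_smul, one_smul]
  abel

variable {W} in
lemma phiRic_neg_kalmanGain {X : Matrix (Fin n) (Fin n) ℝ} (hX : X.PosSemidef) (hW : W.PosDef) :
    phiRic A Q C W θ (-kalmanGain A C W X) X = gRic A Q C W θ X := by
  rw [phiRic_eq_gRic_add A Q C W θ _ X hX.isHermitian.eq hW.isHermitian.eq
    (posDef_mul_mul_transpose_add hX C hW).det_pos.ne'.isUnit, neg_add_cancel]
  simp

variable {W θ} in
lemma phiRic_sub_gRic_posSemidef (K : Matrix (Fin n) (Fin m) ℝ) {X : Matrix (Fin n) (Fin n) ℝ}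
    (hX : X.PosSemidef) (hW : W.PosDef) (hθ : 0 ≤ θ) :
    (phiRic A Q C W θ K X - gRic A Q C W θ X).PosSemidef := by
  have hS := posDef_mul_mul_transpose_add hX C hW
  rw [phiRic_eq_gRic_add A Q C W θ K X hX.isHermitian.eq hW.isHermitian.eq
    hS.det_pos.ne'.isUnit, add_sub_cancel_left]
  exact (hS.posSemidef.mul_mul_transpose_same _).smul hθ

variable {θ} in
lemma phiRic_sub_phiRic_posSemidef (K : Matrix (Fin n) (Fin m) ℝ)
    {X₁ X₂ : Matrix (Fin n) (Fin n) ℝ} (h : (X₁ - X₂).PosSemidef) (hθ₀ : 0 ≤ θ) (hθ₁ : θ ≤ 1) :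
    (phiRic A Q C W θ K X₁ - phiRic A Q C W θ K X₂).PosSemidef := by
  have hdiff : phiRic A Q C W θ K X₁ - phiRic A Q C W θ K X₂ =
      (1 - θ) • (A * (X₁ - X₂) * Aᵀ) + θ • ((A + K * C) * (X₁ - X₂) * (A + K * C)ᵀ) := by
    simp only [phiRic, Matrix.mul_sub, Matrix.sub_mul, smul_sub, smul_add]
    abel
  rw [hdiff]
  exact ((h.mul_mul_transpose_same A).smul (sub_nonneg.2 hθ₁)).add
    ((h.mul_mul_transpose_same _).smul hθ₀)

variable {W θ} in
lemma phiRic_sub_posSemidef (K : Matrix (Fin n) (Fin m) ℝ) {X : Matrix (Fin n) (Fin n) ℝ}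
    (hX : X.PosSemidef) (hW : W.PosSemidef) (hθ₀ : 0 ≤ θ) (hθ₁ : θ ≤ 1) :
    (phiRic A Q C W θ K X - Q).PosSemidef := by
  rw [phiRic, add_sub_cancel_right]
  exact ((hX.mul_mul_transpose_same A).smul (sub_nonneg.2 hθ₁)).add
    (((hX.mul_mul_transpose_same _).add (hW.mul_mul_transpose_same K)).smul hθ₀)

end Riccati

theorem gRic_monotone_and_ge_Q_general {n m : ℕ} (A Q : Matrix (Fin n) (Fin n) ℝ)
    (C : Matrix (Fin m) (Fin n) ℝ) (W : Matrix (Fin m) (Fin m) ℝ) (θ : ℝ)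
    (hW : W.PosDef) (hθ : θ ∈ Set.Ioc (0 : ℝ) 1)
    (X₁ X₂ : Matrix (Fin n) (Fin n) ℝ)
    (hX₁ : X₁.PosSemidef) (hX₂ : X₂.PosSemidef)
    (h12 : (X₁ - X₂).PosSemidef) :
    (gRic A Q C W θ X₁ - gRic A Q C W θ X₂).PosSemidef ∧
      (gRic A Q C W θ X₂ - Q).PosSemidef := by
  obtain ⟨hθ₀, hθ₁⟩ := hθ
  constructor
  · set K := -kalmanGain A C W X₁
    have h := (phiRic_sub_phiRic_posSemidef A Q C W K h12 hθ₀.le hθ₁).add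
      (phiRic_sub_gRic_posSemidef A Q C K hX₂ hW hθ₀.le)
    rwa [sub_add_sub_cancel, phiRic_neg_kalmanGain A Q C θ hX₁ hW] at h
  · rw [← phiRic_neg_kalmanGain A Q C θ hX₂ hW]
    exact phiRic_sub_posSemidef A Q C _ hX₂ hW.posSemidef hθ₀.le hθ₁

/-- Proposition 1, item 1: monotonicity of the modified Riccati operator in `X`,
and domination of `Q`. -/
theorem gRic_monotone_and_ge_Q {n m : ℕ} (A Q : Matrix (Fin n) (Fin n) ℝ)
    (C : Matrix (Fin m) (Fin n) ℝ) (W : Matrix (Fin m) (Fin m) ℝ) (θ : ℝ)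
    (hQ : Q.PosSemidef) (hW : W.PosDef) (hθ : θ ∈ Set.Ioc (0 : ℝ) 1)
    (X₁ X₂ : Matrix (Fin n) (Fin n) ℝ)
    (hX₁ : X₁.PosSemidef) (hX₂ : X₂.PosSemidef)
    (h12 : (X₁ - X₂).PosSemidef) :
    (gRic A Q C W θ X₁ - gRic A Q C W θ X₂).PosSemidef ∧
      (gRic A Q C W θ X₂ - Q).PosSemidef :=
  gRic_monotone_and_ge_Q_general A Q C W θ hW hθ X₁ X₂ hX₁ hX₂ h12
end

section
/- Let W₁ and W₂ be m×m symmetric positive definite matrices with W₁ ≥ W₂. Then for every n×n symmetric positive semidefinite matrix X, g_{θ,W₁}(X) ≥ g_{θ,W₂}(X), i.e. the modified Riccati operator is monotone in the noise parameter W. (Proposition 1, item 5, first part.) -/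
/-!
With `S_W = C X Cᵀ + W` and `M = A X Cᵀ`, the two operators differ by
`θ M (S_{W₂}⁻¹ - S_{W₁}⁻¹) Mᵀ`, a congruence of `S_{W₂}⁻¹ - S_{W₁}⁻¹`. That matrix is positive
semidefinite because inversion reverses the Loewner order:
`S₂⁻¹ - S₁⁻¹ = D S₂ Dᴴ + S₁⁻¹ (S₁ - S₂) S₁⁻¹` with `D = S₁⁻¹ - S₂⁻¹`.
-/

open Matrix

open scoped ComplexOrder

namespace Matrix

variable {ι 𝕜 : Type*} [Fintype ι] [DecidableEq ι] [RCLike 𝕜]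

theorem PosDef.posSemidef_inv_sub_inv {S₁ S₂ : Matrix ι ι 𝕜} (h₁ : S₁.PosDef)
    (h₂ : S₂.PosDef) (h : (S₁ - S₂).PosSemidef) : (S₂⁻¹ - S₁⁻¹).PosSemidef := by
  have hu₁ : IsUnit S₁.det := h₁.det_pos.ne'.isUnit
  have hu₂ : IsUnit S₂.det := h₂.det_pos.ne'.isUnit
  have hsplit : S₂⁻¹ - S₁⁻¹ =
      (S₁⁻¹ - S₂⁻¹) * S₂ * (S₁⁻¹ - S₂⁻¹)ᴴ + S₁⁻¹ * (S₁ - S₂) * (S₁⁻¹)ᴴ := by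
    rw [conjTranspose_sub, h₁.isHermitian.inv.eq, h₂.isHermitian.inv.eq]
    noncomm_ring
    simp only [← mul_assoc, nonsing_inv_mul _ hu₂,
      mul_nonsing_inv _ hu₁, mul_nonsing_inv _ hu₂, one_mul, mul_one]
    abel
  rw [hsplit]
  exact (h₂.posSemidef.mul_mul_conjTranspose_same _).add (h.mul_mul_conjTranspose_same _)

end Matrix

theorem gRic_sub_gRic {n m : ℕ} (A Q : Matrix (Fin n) (Fin n) ℝ)
    (C : Matrix (Fin m) (Fin n) ℝ) (W₁ W₂ : Matrix (Fin m) (Fin m) ℝ) (θ : ℝ)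
    {X : Matrix (Fin n) (Fin n) ℝ} (hX : X.IsSymm) :
    gRic A Q C W₁ θ X - gRic A Q C W₂ θ X =
      θ • (A * X * Cᵀ * ((C * X * Cᵀ + W₂)⁻¹ - (C * X * Cᵀ + W₁)⁻¹) * (A * X * Cᵀ)ᵀ) := by
  have hCXA : C * X * Aᵀ = (A * X * Cᵀ)ᵀ := by
    rw [transpose_mul, transpose_mul, transpose_transpose, hX.eq, Matrix.mul_assoc]
  rw [gRic, gRic, hCXA, Matrix.mul_sub, Matrix.sub_mul, smul_sub]
  abel

theorem gRic_monotone_in_W_general {n m : ℕ} (A Q : Matrix (Fin n) (Fin n) ℝ)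
    (C : Matrix (Fin m) (Fin n) ℝ) (W₁ W₂ : Matrix (Fin m) (Fin m) ℝ) (θ : ℝ)
    (hW₁ : W₁.PosDef) (hW₂ : W₂.PosDef)
    (hW12 : (W₁ - W₂).PosSemidef) (hθ : θ ∈ Set.Ioc (0 : ℝ) 1)
    (X : Matrix (Fin n) (Fin n) ℝ) (hX : X.PosSemidef) :
    (gRic A Q C W₁ θ X - gRic A Q C W₂ θ X).PosSemidef := by
  have hCXC : (C * X * Cᵀ).PosSemidef := by
    simpa only [conjTranspose_eq_transpose_of_trivial] using hX.mul_mul_conjTranspose_same C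
  have hinv : ((C * X * Cᵀ + W₂)⁻¹ - (C * X * Cᵀ + W₁)⁻¹).PosSemidef :=
    (PosDef.posSemidef_add hCXC hW₁).posSemidef_inv_sub_inv (PosDef.posSemidef_add hCXC hW₂)
      (by rwa [add_sub_add_left_eq_sub])
  rw [gRic_sub_gRic A Q C W₁ W₂ θ (isHermitian_iff_isSymm.mp hX.isHermitian),
    ← conjTranspose_eq_transpose_of_trivial]
  exact (hinv.mul_mul_conjTranspose_same _).smul hθ.1.le

/-- Proposition 1, item 5, first part: monotonicity of the modified Riccati
operator in the noise parameter `W`. -/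
theorem gRic_monotone_in_W {n m : ℕ} (A Q : Matrix (Fin n) (Fin n) ℝ)
    (C : Matrix (Fin m) (Fin n) ℝ) (W₁ W₂ : Matrix (Fin m) (Fin m) ℝ) (θ : ℝ)
    (hQ : Q.PosSemidef) (hW₁ : W₁.PosDef) (hW₂ : W₂.PosDef)
    (hW12 : (W₁ - W₂).PosSemidef) (hθ : θ ∈ Set.Ioc (0 : ℝ) 1)
    (X : Matrix (Fin n) (Fin n) ℝ) (hX : X.PosSemidef) :
    (gRic A Q C W₁ θ X - gRic A Q C W₂ θ X).PosSemidef :=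
  gRic_monotone_in_W_general A Q C W₁ W₂ θ hW₁ hW₂ hW12 hθ X hX
end

section
/- Let W₁ ≥ W₂ be m×m symmetric positive definite matrices, and let X₁, X₂ be symmetric positive definite n×n matrices satisfying X₁ = g_{θ,W₁}(X₁) and X₂ = g_{θ,W₂}(X₂). If the iterates g_{θ,W₁}^k(X) converge to X₁ as k → ∞ for every symmetric positive semidefinite X, then X₁ ≥ X₂, i.e. the fixed point of the modified Riccati operator is monotone in the noise parameter W. (Proposition 1, item 5, second part.) -/
/-!
Completing the square in the gain exhibits `g_{θ,W}(X)` as the minimum over all gains `K` of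
the covariance update under gain `K`, an expression that is monotone in `X` (because `θ ≤ 1`)
and in `W`. Hence `g` is monotone in the pair `(X, W)`. In particular
`X₂ = g_{θ,W₂}(X₂) ≤ g_{θ,W₁}(X₂)`, so all iterates of `g_{θ,W₁}` started at `X₂` stay above
`X₂`, and so does their limit `X₁`, the positive semidefinite cone being closed.
-/

open Matrix Filter

open scoped MatrixOrder

namespace Matrix

variable {ι κ : Type*}

lemma IsHermitian.transpose_eq_self {M : Matrix ι ι ℝ} (hM : M.IsHermitian) : Mᵀ = M := by
  simpa using hM.eq

variable [Fintype ι] [Fintype κ]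

lemma isClosed_setOf_posSemidef : IsClosed {M : Matrix ι ι ℝ | M.PosSemidef} := by
  simp only [posSemidef_iff_dotProduct_mulVec, Set.ofPred_and, Set.ofPred_forall]
  refine .inter (isClosed_eq (by fun_prop) continuous_id) (isClosed_iInter fun x => ?_)
  exact isClosed_le continuous_const (by fun_prop)

lemma PosSemidef.mul_mul_transpose_same_s4 {S : Matrix κ κ ℝ} (hS : S.PosSemidef)
    (B : Matrix ι κ ℝ) : (B * S * Bᵀ).PosSemidef := by
  simpa using hS.mul_mul_conjTranspose_same B

end Matrix

section Riccati

variable {n m : ℕ} (A Q : Matrix (Fin n) (Fin n) ℝ) (C : Matrix (Fin m) (Fin n) ℝ)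
  (W : Matrix (Fin m) (Fin m) ℝ) (θ : ℝ)

/-- Covariance update under an arbitrary gain `K`, the measurement arriving with probability
`θ`. -/
noncomputable def gRicGain (K : Matrix (Fin n) (Fin m) ℝ) (X : Matrix (Fin n) (Fin n) ℝ) :
    Matrix (Fin n) (Fin n) ℝ :=
  (1 - θ) • (A * X * Aᵀ) + θ • ((A + K * C) * X * (A + K * C)ᵀ + K * W * Kᵀ) + Q

variable {A Q C W θ} {W₁ W₂ : Matrix (Fin m) (Fin m) ℝ} {X Y : Matrix (Fin n) (Fin n) ℝ}

lemma gRicGain_sub_gRic (hX : X.PosSemidef) (hW : W.PosDef) (K : Matrix (Fin n) (Fin m) ℝ) :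
    gRicGain A Q C W θ K X - gRic A Q C W θ X =
      θ • ((K + A * X * Cᵀ * (C * X * Cᵀ + W)⁻¹) * (C * X * Cᵀ + W) *
        (K + A * X * Cᵀ * (C * X * Cᵀ + W)⁻¹)ᵀ) := by
  have hS : (C * X * Cᵀ + W).PosDef := PosDef.posSemidef_add (hX.mul_mul_transpose_same_s4 C) hW
  set S := C * X * Cᵀ + W
  have hSunit : IsUnit S.det := hS.det_pos.ne'.isUnit
  have hSinvT : (S⁻¹)ᵀ = S⁻¹ := by rw [transpose_nonsing_inv, hS.isHermitian.transpose_eq_self]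
  have hXT : Xᵀ = X := hX.isHermitian.transpose_eq_self
  have square : (K + A * X * Cᵀ * S⁻¹) * S * (K + A * X * Cᵀ * S⁻¹)ᵀ =
      K * S * Kᵀ + K * (C * X * Aᵀ) + A * X * Cᵀ * Kᵀ + A * X * Cᵀ * S⁻¹ * (C * X * Aᵀ) := by
    simp only [transpose_add, transpose_mul, hSinvT, hXT, transpose_transpose, Matrix.add_mul,
      Matrix.mul_add, Matrix.mul_assoc, mul_nonsing_inv_cancel_left _ _ hSunit,
      nonsing_inv_mul_cancel_left _ _ hSunit]
    abel
  rw [gRic, square]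
  simp only [gRicGain, S, transpose_add, transpose_mul, Matrix.mul_add, Matrix.add_mul, sub_smul,
    one_smul, Matrix.mul_assoc]
  module

lemma gRic_eq_gRicGain (hX : X.PosSemidef) (hW : W.PosDef) :
    gRic A Q C W θ X = gRicGain A Q C W θ (-(A * X * Cᵀ * (C * X * Cᵀ + W)⁻¹)) X := by
  rw [eq_comm, ← sub_eq_zero, gRicGain_sub_gRic hX hW, neg_add_cancel, Matrix.zero_mul,
    Matrix.zero_mul, smul_zero]

lemma gRic_le_gRicGain (hθ : 0 ≤ θ) (hX : X.PosSemidef) (hW : W.PosDef)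
    (K : Matrix (Fin n) (Fin m) ℝ) : gRic A Q C W θ X ≤ gRicGain A Q C W θ K X := by
  rw [le_iff, gRicGain_sub_gRic hX hW]
  exact (PosDef.posSemidef_add (hX.mul_mul_transpose_same_s4 C) hW).posSemidef
    |>.mul_mul_transpose_same _ |>.smul hθ

lemma gRicGain_mono_noise (hθ : 0 ≤ θ) (hW : W₂ ≤ W₁) (K : Matrix (Fin n) (Fin m) ℝ) :
    gRicGain A Q C W₂ θ K X ≤ gRicGain A Q C W₁ θ K X := by
  have hdiff : gRicGain A Q C W₁ θ K X - gRicGain A Q C W₂ θ K X = θ • (K * (W₁ - W₂) * Kᵀ) := by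
    simp only [gRicGain, Matrix.mul_sub, Matrix.sub_mul]
    module
  rw [le_iff, hdiff]
  exact (PosSemidef.mul_mul_transpose_same_s4 hW K).smul hθ

lemma gRicGain_mono_cov (hθ : θ ∈ Set.Icc 0 1) (hXY : X ≤ Y) (K : Matrix (Fin n) (Fin m) ℝ) :
    gRicGain A Q C W θ K X ≤ gRicGain A Q C W θ K Y := by
  have hdiff : gRicGain A Q C W θ K Y - gRicGain A Q C W θ K X =
      (1 - θ) • (A * (Y - X) * Aᵀ) + θ • ((A + K * C) * (Y - X) * (A + K * C)ᵀ) := by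
    simp only [gRicGain, Matrix.mul_sub, Matrix.sub_mul]
    module
  rw [le_iff, hdiff]
  exact ((PosSemidef.mul_mul_transpose_same_s4 hXY A).smul (sub_nonneg.2 hθ.2)).add
    ((PosSemidef.mul_mul_transpose_same_s4 hXY _).smul hθ.1)

theorem gRic_mono (hθ : θ ∈ Set.Icc 0 1) (hW₂ : W₂.PosDef) (hW : W₂ ≤ W₁)
    (hX : X.PosSemidef) (hXY : X ≤ Y) : gRic A Q C W₂ θ X ≤ gRic A Q C W₁ θ Y := by
  have hY : Y.PosSemidef := by simpa using PosSemidef.add hXY hX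
  have hW₁ : W₁.PosDef := by simpa using PosDef.posSemidef_add hW hW₂
  calc gRic A Q C W₂ θ X
      ≤ gRicGain A Q C W₂ θ (-(A * Y * Cᵀ * (C * Y * Cᵀ + W₁)⁻¹)) X :=
        gRic_le_gRicGain hθ.1 hX hW₂ _
    _ ≤ gRicGain A Q C W₁ θ (-(A * Y * Cᵀ * (C * Y * Cᵀ + W₁)⁻¹)) X :=
        gRicGain_mono_noise hθ.1 hW _
    _ ≤ gRicGain A Q C W₁ θ (-(A * Y * Cᵀ * (C * Y * Cᵀ + W₁)⁻¹)) Y :=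
        gRicGain_mono_cov hθ hXY _
    _ = gRic A Q C W₁ θ Y := (gRic_eq_gRicGain hY hW₁).symm

end Riccati

theorem gRic_fixed_point_monotone_in_W_general {n m : ℕ}
    (A Q : Matrix (Fin n) (Fin n) ℝ) (C : Matrix (Fin m) (Fin n) ℝ)
    (W₁ W₂ : Matrix (Fin m) (Fin m) ℝ) (θ : ℝ)
    (hθ : θ ∈ Set.Ioc (0 : ℝ) 1)
    (hW₂ : W₂.PosDef) (hW12 : (W₁ - W₂).PosSemidef)
    (X₁ X₂ : Matrix (Fin n) (Fin n) ℝ) (hX₂ : X₂.PosDef)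
    (hfix₂ : X₂ = gRic A Q C W₂ θ X₂)
    (hconv : ∀ X : Matrix (Fin n) (Fin n) ℝ, X.PosSemidef →
      Tendsto (fun k => (gRic A Q C W₁ θ)^[k] X) atTop (nhds X₁)) :
    (X₁ - X₂).PosSemidef := by
  have hiterate : ∀ k, X₂ ≤ (gRic A Q C W₁ θ)^[k] X₂ := by
    intro k
    induction k with
    | zero => exact le_rfl
    | succ k ih =>
      rw [Function.iterate_succ_apply']
      exact hfix₂.trans_le (gRic_mono (Set.Ioc_subset_Icc_self hθ) hW₂ hW12 hX₂.posSemidef ih)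
  exact isClosed_setOf_posSemidef.mem_of_tendsto ((hconv X₂ hX₂.posSemidef).sub_const X₂)
    (Eventually.of_forall hiterate)

/-- Proposition 1, item 5, second part: the fixed point of the modified Riccati
operator is monotone in the noise parameter `W`. -/
theorem gRic_fixed_point_monotone_in_W {n m : ℕ}
    (A Q : Matrix (Fin n) (Fin n) ℝ) (C : Matrix (Fin m) (Fin n) ℝ)
    (W₁ W₂ : Matrix (Fin m) (Fin m) ℝ) (θ : ℝ)
    (hQ : Q.PosSemidef) (hθ : θ ∈ Set.Ioc (0 : ℝ) 1)
    (hW₁ : W₁.PosDef) (hW₂ : W₂.PosDef) (hW12 : (W₁ - W₂).PosSemidef)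
    (X₁ X₂ : Matrix (Fin n) (Fin n) ℝ) (hX₁ : X₁.PosDef) (hX₂ : X₂.PosDef)
    (hfix₁ : X₁ = gRic A Q C W₁ θ X₁) (hfix₂ : X₂ = gRic A Q C W₂ θ X₂)
    (hconv : ∀ X : Matrix (Fin n) (Fin n) ℝ, X.PosSemidef →
      Tendsto (fun k => (gRic A Q C W₁ θ)^[k] X) atTop (nhds X₁)) :
    (X₁ - X₂).PosSemidef :=
  gRic_fixed_point_monotone_in_W_general A Q C W₁ W₂ θ hθ hW₂ hW12 X₁ X₂ hX₂ hfix₂ hconv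
end

section
/- Assume Q is symmetric positive definite and W is symmetric positive definite, and define Λ_W(S) = (A (S + Cᵀ W⁻¹ C)⁻¹ Aᵀ + Q)⁻¹ for symmetric positive definite S. Then for every symmetric positive definite n×n matrix X and every k ∈ ℕ, the k-fold iterates satisfy (Λ_W^k(X⁻¹))⁻¹ = g_W^k(X). (Identity established in Appendix C.) -/
open Matrix

/-- The Riccati operator `g_W(X) = A X Aᵀ + Q − A X Cᵀ (C X Cᵀ + W)⁻¹ C X Aᵀ`. -/
noncomputable def gW {n m : ℕ} (A Q : Matrix (Fin n) (Fin n) ℝ)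
    (C : Matrix (Fin m) (Fin n) ℝ) (W : Matrix (Fin m) (Fin m) ℝ)
    (X : Matrix (Fin n) (Fin n) ℝ) : Matrix (Fin n) (Fin n) ℝ :=
  A * X * Aᵀ + Q - A * X * Cᵀ * (C * X * Cᵀ + W)⁻¹ * (C * X * Aᵀ)

/-- The information-form map `Λ_W(S) = (A (S + CᵀW⁻¹C)⁻¹ Aᵀ + Q)⁻¹`. -/
noncomputable def LamW {n m : ℕ} (A Q : Matrix (Fin n) (Fin n) ℝ)
    (C : Matrix (Fin m) (Fin n) ℝ) (W : Matrix (Fin m) (Fin m) ℝ)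
    (S : Matrix (Fin n) (Fin n) ℝ) : Matrix (Fin n) (Fin n) ℝ :=
  (A * (S + Cᵀ * W⁻¹ * C)⁻¹ * Aᵀ + Q)⁻¹

lemma aux_CXC_add_W_posDef {n m : ℕ} (C : Matrix (Fin m) (Fin n) ℝ)
    {W : Matrix (Fin m) (Fin m) ℝ} (hW : W.PosDef)
    {Y : Matrix (Fin n) (Fin n) ℝ} (hY : Y.PosDef) :
    (C * Y * Cᵀ + W).PosDef := by
  have h1 : (C * Y * Cᴴ).PosSemidef := hY.posSemidef.mul_mul_conjTranspose_same C
  rw [conjTranspose_eq_transpose_of_trivial] at h1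
  exact Matrix.PosDef.posSemidef_add h1 hW

lemma aux_woodbury {n m : ℕ} (C : Matrix (Fin m) (Fin n) ℝ)
    {W : Matrix (Fin m) (Fin m) ℝ} (hW : W.PosDef)
    {Y : Matrix (Fin n) (Fin n) ℝ} (hY : Y.PosDef) :
    (Y⁻¹ + Cᵀ * W⁻¹ * C)⁻¹ = Y - Y * Cᵀ * (C * Y * Cᵀ + W)⁻¹ * (C * Y) := by
  have hYY : Y⁻¹⁻¹ = Y := nonsing_inv_nonsing_inv _ hY.det_pos.ne'.isUnit
  have hWW : W⁻¹⁻¹ = W := nonsing_inv_nonsing_inv _ hW.det_pos.ne'.isUnit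
  have h := add_mul_mul_inv_eq_sub Y⁻¹ Cᵀ W⁻¹ C hY.inv.isUnit hW.inv.isUnit
    (by rw [hYY, hWW]; exact (hW.add_posSemidef ((conjTranspose_eq_transpose_of_trivial C) ▸ hY.posSemidef.mul_mul_conjTranspose_same C)).isUnit)
  rw [h, hYY, hWW, add_comm W (C * Y * Cᵀ)]
  rw [Matrix.mul_assoc (Y * Cᵀ * (C * Y * Cᵀ + W)⁻¹) C Y]

lemma aux_CWC_psd {n m : ℕ} (C : Matrix (Fin m) (Fin n) ℝ)
    {W : Matrix (Fin m) (Fin m) ℝ} (hW : W.PosDef) :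
    (Cᵀ * W⁻¹ * C).PosSemidef := by
  have := hW.inv.posSemidef.conjTranspose_mul_mul_same C
  rwa [conjTranspose_eq_transpose_of_trivial] at this

lemma aux_gW_eq {n m : ℕ} (A Q : Matrix (Fin n) (Fin n) ℝ)
    (C : Matrix (Fin m) (Fin n) ℝ) {W : Matrix (Fin m) (Fin m) ℝ} (hW : W.PosDef)
    {Y : Matrix (Fin n) (Fin n) ℝ} (hY : Y.PosDef) :
    gW A Q C W Y = A * (Y⁻¹ + Cᵀ * W⁻¹ * C)⁻¹ * Aᵀ + Q := by
  rw [aux_woodbury C hW hY, gW]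
  simp only [Matrix.mul_sub, Matrix.sub_mul, Matrix.mul_assoc]
  abel

lemma aux_gW_posDef {n m : ℕ} (A : Matrix (Fin n) (Fin n) ℝ)
    {Q : Matrix (Fin n) (Fin n) ℝ} (hQ : Q.PosDef)
    (C : Matrix (Fin m) (Fin n) ℝ) {W : Matrix (Fin m) (Fin m) ℝ} (hW : W.PosDef)
    {Y : Matrix (Fin n) (Fin n) ℝ} (hY : Y.PosDef) :
    (gW A Q C W Y).PosDef := by
  rw [aux_gW_eq A Q C hW hY]
  have hM : (Y⁻¹ + Cᵀ * W⁻¹ * C).PosDef := hY.inv.add_posSemidef (aux_CWC_psd C hW)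
  have h2 := hM.inv.posSemidef.mul_mul_conjTranspose_same A
  rw [conjTranspose_eq_transpose_of_trivial] at h2
  exact Matrix.PosDef.posSemidef_add h2 hQ

/-- Identity established in Appendix C: `(Λ_W^k(X⁻¹))⁻¹ = g_W^k(X)` for every
positive definite `X` and every `k`. -/
theorem LamW_iterate_inv_eq_gW_iterate {n m : ℕ}
    (A Q : Matrix (Fin n) (Fin n) ℝ) (C : Matrix (Fin m) (Fin n) ℝ)
    (W : Matrix (Fin m) (Fin m) ℝ) (hQ : Q.PosDef) (hW : W.PosDef)
    (X : Matrix (Fin n) (Fin n) ℝ) (hX : X.PosDef) (k : ℕ) :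
    ((LamW A Q C W)^[k] X⁻¹)⁻¹ = (gW A Q C W)^[k] X := by
  have key : ∀ k : ℕ, ((gW A Q C W)^[k] X).PosDef ∧
      (LamW A Q C W)^[k] X⁻¹ = ((gW A Q C W)^[k] X)⁻¹ := by
    intro k
    induction k with
    | zero => exact ⟨hX, rfl⟩
    | succ k ih =>
      obtain ⟨hpd, heq⟩ := ih
      refine ⟨by rw [Function.iterate_succ_apply']; exact aux_gW_posDef A hQ C hW hpd, ?_⟩
      rw [Function.iterate_succ_apply', Function.iterate_succ_apply', heq, LamW,
        aux_gW_eq A Q C hW hpd]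
  obtain ⟨hpd, heq⟩ := key k
  rw [heq, nonsing_inv_nonsing_inv _ hpd.det_pos.ne'.isUnit]
end

section
/- Let A be an n×n real matrix and Q an n×n symmetric positive definite matrix. The map S ↦ (A S⁻¹ Aᵀ + Q)⁻¹ is matrix-concave on the set of symmetric positive definite n×n matrices: for all symmetric positive definite S₁, S₂ and α ∈ [0,1], (A (α S₁ + (1−α) S₂)⁻¹ Aᵀ + Q)⁻¹ ≥ α (A S₁⁻¹ Aᵀ + Q)⁻¹ + (1−α) (A S₂⁻¹ Aᵀ + Q)⁻¹. (Concavity of the inverse-covariance time-update map, used in Appendix C.) -/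
/-!
For positive definite `S` and `Q`, the quadratic form `x ⬝ᵥ (A S⁻¹ Aᵀ + Q)⁻¹ *ᵥ x` is the minimum
over `w` of `w ⬝ᵥ S *ᵥ w + (x - A w) ⬝ᵥ Q⁻¹ *ᵥ (x - A w)`, attained at
`w = S⁻¹ Aᵀ (A S⁻¹ Aᵀ + Q)⁻¹ x`. Each such cost is affine in `S`, so evaluating the cost of
`α S₁ + (1 - α) S₂` at its own minimiser and bounding the costs of `S₁` and `S₂` there by their
minima gives concavity, one vector `x` at a time.
-/

open Matrix

namespace Matrix

variable {ι m : Type*}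

lemma PosDef.convexComb {S₁ S₂ : Matrix ι ι ℝ} (h₁ : S₁.PosDef) (h₂ : S₂.PosDef) {a b : ℝ}
    (ha : 0 ≤ a) (hb : 0 ≤ b) (hab : a + b = 1) : (a • S₁ + b • S₂).PosDef := by
  rcases ha.eq_or_lt with rfl | ha
  · simpa [show b = 1 by linarith] using h₂
  · exact (h₁.smul ha).add_posSemidef (h₂.posSemidef.smul hb)

variable [Fintype ι] [Fintype m]

lemma PosSemidef.two_mul_dotProduct_sub_le {M : Matrix ι ι ℝ} (hM : M.PosSemidef) (a b : ι → ℝ) :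
    2 * ((M *ᵥ b) ⬝ᵥ a) - b ⬝ᵥ M *ᵥ b ≤ a ⬝ᵥ M *ᵥ a := by
  have hsymm : Mᵀ = M := hM.isHermitian
  have hsq := hM.dotProduct_mulVec_nonneg (a - b)
  have hab : a ⬝ᵥ M *ᵥ b = (M *ᵥ b) ⬝ᵥ a := dotProduct_comm _ _
  have hba : b ⬝ᵥ M *ᵥ a = (M *ᵥ b) ⬝ᵥ a := by
    rw [dotProduct_mulVec, ← mulVec_transpose, hsymm]
  simp only [star_trivial, mulVec_sub, dotProduct_sub, sub_dotProduct] at hsq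
  linarith

variable [DecidableEq ι] [DecidableEq m]

lemma mulVec_nonsing_inv_mulVec {R : Type*} [CommRing R] {M : Matrix ι ι R} (hM : IsUnit M)
    (v : ι → R) : M *ᵥ M⁻¹ *ᵥ v = v := by
  rw [mulVec_mulVec, mul_nonsing_inv _ ((isUnit_iff_isUnit_det M).1 hM), one_mulVec]

lemma nonsing_inv_mulVec_mulVec {R : Type*} [CommRing R] {M : Matrix ι ι R} (hM : IsUnit M)
    (v : ι → R) : M⁻¹ *ᵥ M *ᵥ v = v := by
  rw [mulVec_mulVec, nonsing_inv_mul _ ((isUnit_iff_isUnit_det M).1 hM), one_mulVec]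

noncomputable def timeUpdateCost (A : Matrix m ι ℝ) (Q : Matrix m m ℝ) (S : Matrix ι ι ℝ)
    (x : m → ℝ) (w : ι → ℝ) : ℝ :=
  w ⬝ᵥ S *ᵥ w + (x - A *ᵥ w) ⬝ᵥ Q⁻¹ *ᵥ (x - A *ᵥ w)

omit [DecidableEq ι] in
lemma timeUpdateCost_convexComb (A : Matrix m ι ℝ) (Q : Matrix m m ℝ) (S₁ S₂ : Matrix ι ι ℝ)
    (x : m → ℝ) (w : ι → ℝ) {a b : ℝ} (hab : a + b = 1) :
    timeUpdateCost A Q (a • S₁ + b • S₂) x w =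
      a * timeUpdateCost A Q S₁ x w + b * timeUpdateCost A Q S₂ x w := by
  simp only [timeUpdateCost, add_mulVec, smul_mulVec, dotProduct_add, dotProduct_smul,
    smul_eq_mul]
  linear_combination (x - A *ᵥ w) ⬝ᵥ Q⁻¹ *ᵥ (x - A *ᵥ w) * hab.symm

omit [DecidableEq m] in
lemma PosDef.mul_inv_mul_transpose_add {A : Matrix m ι ℝ} {Q : Matrix m m ℝ}
    {S : Matrix ι ι ℝ} (hQ : Q.PosDef) (hS : S.PosDef) : (A * S⁻¹ * Aᵀ + Q).PosDef :=
  PosDef.posSemidef_add (hS.inv.posSemidef.mul_mul_conjTranspose_same A) hQ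

lemma isLeast_timeUpdateCost (A : Matrix m ι ℝ) {Q : Matrix m m ℝ} {S : Matrix ι ι ℝ}
    (hQ : Q.PosDef) (hS : S.PosDef) (x : m → ℝ) :
    IsLeast (Set.range (timeUpdateCost A Q S x)) (x ⬝ᵥ (A * S⁻¹ * Aᵀ + Q)⁻¹ *ᵥ x) := by
  set p := (A * S⁻¹ * Aᵀ + Q)⁻¹ *ᵥ x
  set w₀ := S⁻¹ *ᵥ Aᵀ *ᵥ p
  have hSw₀ : S *ᵥ w₀ = Aᵀ *ᵥ p := mulVec_nonsing_inv_mulVec hS.isUnit _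
  have hQp : Q⁻¹ *ᵥ Q *ᵥ p = p := nonsing_inv_mulVec_mulVec hQ.isUnit _
  have hx : x = A *ᵥ w₀ + Q *ᵥ p := by
    rw [mulVec_mulVec, mulVec_mulVec, ← add_mulVec,
      mulVec_nonsing_inv_mulVec (hQ.mul_inv_mul_transpose_add hS).isUnit]
  have hw₀ : w₀ ⬝ᵥ Aᵀ *ᵥ p = A *ᵥ w₀ ⬝ᵥ p := by
    rw [mulVec_transpose, dotProduct_comm, ← dotProduct_mulVec, dotProduct_comm]
  have hxp : x ⬝ᵥ p = A *ᵥ w₀ ⬝ᵥ p + Q *ᵥ p ⬝ᵥ p := by rw [← add_dotProduct, ← hx]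
  refine ⟨⟨w₀, ?_⟩, ?_⟩
  · have hres : x - A *ᵥ w₀ = Q *ᵥ p := by rw [hx]; abel
    rw [timeUpdateCost, hres, hQp, hSw₀, hw₀, hxp]
  · rintro _ ⟨w, rfl⟩
    -- bound both quadratic terms below by their tangents at the minimiser; these sum to `x ⬝ᵥ p`
    have h₁ := hS.posSemidef.two_mul_dotProduct_sub_le w w₀
    have h₂ := hQ.inv.posSemidef.two_mul_dotProduct_sub_le (x - A *ᵥ w) (Q *ᵥ p)
    have hAw : Aᵀ *ᵥ p ⬝ᵥ w = p ⬝ᵥ A *ᵥ w := by rw [mulVec_transpose, ← dotProduct_mulVec]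
    rw [hSw₀, hw₀, hAw] at h₁
    rw [hQp, dotProduct_sub, dotProduct_comm p x] at h₂
    rw [timeUpdateCost]
    linarith

end Matrix

/-- Concavity of the inverse-covariance time-update map (Appendix C):
`S ↦ (A S⁻¹ Aᵀ + Q)⁻¹` is matrix-concave on positive definite matrices. -/
theorem time_update_inv_concave {n : ℕ} (A Q : Matrix (Fin n) (Fin n) ℝ)
    (hQ : Q.PosDef)
    (S₁ S₂ : Matrix (Fin n) (Fin n) ℝ) (hS₁ : S₁.PosDef) (hS₂ : S₂.PosDef)
    (α : ℝ) (hα : α ∈ Set.Icc (0 : ℝ) 1) :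
    ((A * (α • S₁ + (1 - α) • S₂)⁻¹ * Aᵀ + Q)⁻¹ -
      (α • (A * S₁⁻¹ * Aᵀ + Q)⁻¹ +
        (1 - α) • (A * S₂⁻¹ * Aᵀ + Q)⁻¹)).PosSemidef := by
  obtain ⟨hα₀, hα₁⟩ := hα
  have hS := hS₁.convexComb hS₂ hα₀ (sub_nonneg.2 hα₁) (add_sub_cancel α 1)
  have hsymm {S : Matrix (Fin n) (Fin n) ℝ} (hS : S.PosDef) :=
    (hQ.mul_inv_mul_transpose_add (A := A) hS).inv.isHermitian
  refine posSemidef_iff_dotProduct_mulVec.2 ⟨(hsymm hS).sub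
    (((hsymm hS₁).smul (.all α)).add ((hsymm hS₂).smul (.all _))), fun x => ?_⟩
  obtain ⟨w, hw⟩ := (isLeast_timeUpdateCost A hQ hS x).1
  have h₁ := (isLeast_timeUpdateCost A hQ hS₁ x).2 ⟨w, rfl⟩
  have h₂ := (isLeast_timeUpdateCost A hQ hS₂ x).2 ⟨w, rfl⟩
  rw [timeUpdateCost_convexComb _ _ _ _ _ _ (add_sub_cancel α 1)] at hw
  simp only [star_trivial, sub_mulVec, add_mulVec, smul_mulVec, dotProduct_sub, dotProduct_add,
    dotProduct_smul, smul_eq_mul, ← hw, sub_nonneg]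
  exact add_le_add (mul_le_mul_of_nonneg_left h₁ hα₀)
    (mul_le_mul_of_nonneg_left h₂ (sub_nonneg.2 hα₁))
end

section
/- Let Q be n×n symmetric positive semidefinite, R m×m symmetric positive definite, Y m×m symmetric positive definite, λ ∈ (0,1], S an n×n symmetric positive definite matrix and X = S⁻¹. Then g_{λ,R+Y⁻¹}(X) ≤ X if and only if the 2×2 block matrix [[X − (1−λ) A X Aᵀ − Q, √λ A], [√λ Aᵀ, S + Cᵀ (R + Y⁻¹)⁻¹ C]] is positive semidefinite. (Schur-complement reformulation, equation (24) in the proof of Theorem 2.) -/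
open Matrix

namespace Matrix.PosDef

variable {n m : Type*} [Fintype n] [Fintype m]

theorem add_transpose_mul_mul {S : Matrix n n ℝ} {W : Matrix m m ℝ} (hS : S.PosDef)
    (hW : W.PosSemidef) (C : Matrix m n ℝ) : (S + Cᵀ * W * C).PosDef := by
  simpa using hS.add_posSemidef (hW.conjTranspose_mul_mul_same C)

/-- The Woodbury identity. -/
theorem inv_add_transpose_mul_inv_mul_eq_sub [DecidableEq n] [DecidableEq m]
    {S : Matrix n n ℝ} {W : Matrix m m ℝ} (hS : S.PosDef) (hW : W.PosDef) (C : Matrix m n ℝ) :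
    (S + Cᵀ * W⁻¹ * C)⁻¹ = S⁻¹ - S⁻¹ * Cᵀ * (C * S⁻¹ * Cᵀ + W)⁻¹ * (C * S⁻¹) := by
  have hWW : W⁻¹⁻¹ = W := nonsing_inv_nonsing_inv _ ((isUnit_iff_isUnit_det _).1 hW.isUnit)
  have hunit : IsUnit (W⁻¹⁻¹ + C * S⁻¹ * Cᵀ) := by
    rw [hWW]
    simpa [Matrix.mul_assoc] using (hW.add_posSemidef
      (hS.inv.posSemidef.mul_mul_conjTranspose_same C)).isUnit
  rw [add_mul_mul_inv_eq_sub S Cᵀ W⁻¹ C hS.isUnit hW.inv.isUnit hunit, hWW, add_comm W,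
    Matrix.mul_assoc _ C]

end Matrix.PosDef

theorem sub_gRic_eq_sub_mul_mul {n m : ℕ} (A Q : Matrix (Fin n) (Fin n) ℝ)
    (C : Matrix (Fin m) (Fin n) ℝ) (W : Matrix (Fin m) (Fin m) ℝ) {θ : ℝ} (hθ : 0 ≤ θ)
    (X : Matrix (Fin n) (Fin n) ℝ) :
    X - gRic A Q C W θ X = (X - (1 - θ) • (A * X * Aᵀ) - Q)
      - (√θ • A) * (X - X * Cᵀ * (C * X * Cᵀ + W)⁻¹ * (C * X)) * (√θ • Aᵀ) := by
  have hsq : √θ * √θ = θ := Real.mul_self_sqrt hθ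
  simp only [gRic, Matrix.smul_mul, Matrix.mul_smul, smul_smul, hsq, mul_sub, sub_mul, sub_smul,
    one_smul, Matrix.mul_assoc]
  abel

theorem gRic_le_iff_schur_block_general {n m : ℕ}
    (A Q : Matrix (Fin n) (Fin n) ℝ) (C : Matrix (Fin m) (Fin n) ℝ)
    (R Y : Matrix (Fin m) (Fin m) ℝ) (lam : ℝ)
    (hR : R.PosDef) (hY : Y.PosDef)
    (hlam : lam ∈ Set.Ioc (0 : ℝ) 1)
    (S X : Matrix (Fin n) (Fin n) ℝ) (hS : S.PosDef) (hX : X = S⁻¹) :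
    (X - gRic A Q C (R + Y⁻¹) lam X).PosSemidef ↔
      (Matrix.fromBlocks
        (X - (1 - lam) • (A * X * Aᵀ) - Q) (Real.sqrt lam • A)
        (Real.sqrt lam • Aᵀ) (S + Cᵀ * (R + Y⁻¹)⁻¹ * C)).PosSemidef := by
  have hW : (R + Y⁻¹).PosDef := hR.add_posSemidef hY.inv.posSemidef
  have hD : (S + Cᵀ * (R + Y⁻¹)⁻¹ * C).PosDef := hS.add_transpose_mul_mul hW.inv.posSemidef C
  have := hD.isUnit.invertible
  have hAt : √lam • Aᵀ = (√lam • A)ᴴ := by simp [conjTranspose_eq_transpose_of_trivial]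
  rw [sub_gRic_eq_sub_mul_mul A Q C _ hlam.1.le, hX,
    ← hS.inv_add_transpose_mul_inv_mul_eq_sub hW C, hAt]
  exact (PosDef.fromBlocks₂₂ _ _ hD).symm

/-- Schur-complement reformulation (equation (24) in the proof of Theorem 2):
with `X = S⁻¹`, the inequality `g_{λ,R+Y⁻¹}(X) ≤ X` holds iff the block matrix
`[[X − (1−λ)AXAᵀ − Q, √λ A], [√λ Aᵀ, S + Cᵀ(R+Y⁻¹)⁻¹C]]` is positive
semidefinite. -/
theorem gRic_le_iff_schur_block {n m : ℕ}
    (A Q : Matrix (Fin n) (Fin n) ℝ) (C : Matrix (Fin m) (Fin n) ℝ)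
    (R Y : Matrix (Fin m) (Fin m) ℝ) (lam : ℝ)
    (hQ : Q.PosSemidef) (hR : R.PosDef) (hY : Y.PosDef)
    (hlam : lam ∈ Set.Ioc (0 : ℝ) 1)
    (S X : Matrix (Fin n) (Fin n) ℝ) (hS : S.PosDef) (hX : X = S⁻¹) :
    (X - gRic A Q C (R + Y⁻¹) lam X).PosSemidef ↔
      (Matrix.fromBlocks
        (X - (1 - lam) • (A * X * Aᵀ) - Q) (Real.sqrt lam • A)
        (Real.sqrt lam • Aᵀ) (S + Cᵀ * (R + Y⁻¹)⁻¹ * C)).PosSemidef :=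
  gRic_le_iff_schur_block_general A Q C R Y lam hR hY hlam S X hS hX
end

section
/- Let Q be n×n symmetric positive definite, R m×m symmetric positive definite, M n×n symmetric positive definite, λ ∈ (0,1], and Y an m×m symmetric positive definite matrix. Then the following are equivalent: (i) there exists a symmetric matrix X with 0 < X ≤ M and g_{λ,R+Y⁻¹}(X) ≤ X; (ii) there exists a symmetric positive definite matrix S such that Ψ(S,Y) ≥ 0 and the block matrix [[S, I],[I, M]] is positive semidefinite. (Core feasibility equivalence of Theorem 2, proved in Appendix D.) -/
/-!
Both Ψ(S,Y) ≥ 0 and X ≥ g_{λ,W}(X), W = R + Y⁻¹, are reduced to the same inequality by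
Schur complements. Eliminating the block diag(Q⁻¹, Y + R⁻¹) of Ψ and using
(R + Y⁻¹)⁻¹ = R⁻¹ − R⁻¹(Y + R⁻¹)⁻¹R⁻¹ leaves a 3×3 block matrix whose lower right block is
diag(G, S) with G = S + Cᵀ W⁻¹ C; eliminating that block and conjugating by X = S⁻¹ gives
X − Q − λ A G⁻¹ Aᵀ − (1 − λ) A X Aᵀ ≥ 0. By the Woodbury identity
G⁻¹ = X − X Cᵀ (C X Cᵀ + W)⁻¹ C X, and this is X ≥ g_{λ,W}(X). Finally [[S, I], [I, M]] ≥ 0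
iff M ≥ S⁻¹, so X ↦ X⁻¹ matches the two feasibility problems.
-/

open Matrix

/-- The symmetric 5×5 block matrix `Ψ(S,Y)` of equation (10):
`[[S, √λ S A, √(1−λ) S A, S, 0],
  [√λ Aᵀ S, S + Cᵀ R⁻¹ C, 0, 0, Cᵀ R⁻¹],
  [√(1−λ) Aᵀ S, 0, S, 0, 0],
  [S, 0, 0, Q⁻¹, 0],
  [0, R⁻¹ C, 0, 0, Y + R⁻¹]]`. -/
noncomputable def Psi {n m : ℕ} (A Q : Matrix (Fin n) (Fin n) ℝ)
    (C : Matrix (Fin m) (Fin n) ℝ) (R : Matrix (Fin m) (Fin m) ℝ) (lam : ℝ)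
    (S : Matrix (Fin n) (Fin n) ℝ) (Y : Matrix (Fin m) (Fin m) ℝ) :
    Matrix (Fin n ⊕ (Fin n ⊕ (Fin n ⊕ (Fin n ⊕ Fin m))))
      (Fin n ⊕ (Fin n ⊕ (Fin n ⊕ (Fin n ⊕ Fin m)))) ℝ :=
  Matrix.of fun i j =>
    match i, j with
    | .inl i, .inl j => S i j
    | .inl i, .inr (.inl j) => (Real.sqrt lam • (S * A)) i j
    | .inl i, .inr (.inr (.inl j)) => (Real.sqrt (1 - lam) • (S * A)) i j
    | .inl i, .inr (.inr (.inr (.inl j))) => S i j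
    | .inl _, .inr (.inr (.inr (.inr _))) => 0
    | .inr (.inl i), .inl j => (Real.sqrt lam • (Aᵀ * S)) i j
    | .inr (.inl i), .inr (.inl j) => (S + Cᵀ * R⁻¹ * C) i j
    | .inr (.inl _), .inr (.inr (.inl _)) => 0
    | .inr (.inl _), .inr (.inr (.inr (.inl _))) => 0
    | .inr (.inl i), .inr (.inr (.inr (.inr j))) => (Cᵀ * R⁻¹) i j
    | .inr (.inr (.inl i)), .inl j => (Real.sqrt (1 - lam) • (Aᵀ * S)) i j
    | .inr (.inr (.inl _)), .inr (.inl _) => 0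
    | .inr (.inr (.inl i)), .inr (.inr (.inl j)) => S i j
    | .inr (.inr (.inl _)), .inr (.inr (.inr _)) => 0
    | .inr (.inr (.inr (.inl i))), .inl j => S i j
    | .inr (.inr (.inr (.inl _))), .inr (.inl _) => 0
    | .inr (.inr (.inr (.inl _))), .inr (.inr (.inl _)) => 0
    | .inr (.inr (.inr (.inl i))), .inr (.inr (.inr (.inl j))) => Q⁻¹ i j
    | .inr (.inr (.inr (.inl _))), .inr (.inr (.inr (.inr _))) => 0
    | .inr (.inr (.inr (.inr _))), .inl _ => 0
    | .inr (.inr (.inr (.inr i))), .inr (.inl j) => (R⁻¹ * C) i j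
    | .inr (.inr (.inr (.inr _))), .inr (.inr (.inl _)) => 0
    | .inr (.inr (.inr (.inr _))), .inr (.inr (.inr (.inl _))) => 0
    | .inr (.inr (.inr (.inr i))), .inr (.inr (.inr (.inr j))) => (Y + R⁻¹) i j

namespace Matrix

section Blocks

open scoped ComplexOrder

variable {𝕜 : Type*} [RCLike 𝕜] {m n₁ n₂ : Type*} [Fintype m] [Fintype n₁] [Fintype n₂]
  [DecidableEq n₁] [DecidableEq n₂]

theorem PosDef.fromBlocks_zero_zero {D₁ : Matrix n₁ n₁ 𝕜} {D₂ : Matrix n₂ n₂ 𝕜}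
    (h₁ : D₁.PosDef) (h₂ : D₂.PosDef) : (fromBlocks D₁ 0 0 D₂).PosDef := by
  have : Invertible D₂ := h₂.isUnit.invertible
  have hpsd : (fromBlocks D₁ 0 0 D₂).PosSemidef := by
    simpa using (PosDef.fromBlocks₂₂ D₁ (0 : Matrix n₁ n₂ 𝕜) h₂).2 (by simpa using h₁.posSemidef)
  exact hpsd.posDef_iff_isUnit.2 (isUnit_fromBlocks_zero₂₁.2 ⟨h₁.isUnit, h₂.isUnit⟩)

theorem PosDef.inv_fromBlocks_zero_zero {D₁ : Matrix n₁ n₁ 𝕜} {D₂ : Matrix n₂ n₂ 𝕜}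
    (h₁ : D₁.PosDef) (h₂ : D₂.PosDef) :
    (fromBlocks D₁ 0 0 D₂)⁻¹ = fromBlocks D₁⁻¹ 0 0 D₂⁻¹ := by
  simpa using inv_fromBlocks_zero₂₁_of_isUnit_iff D₁ 0 D₂ (iff_of_true h₁.isUnit h₂.isUnit)

theorem posSemidef_fromBlocks_fromCols_iff (A : Matrix m m 𝕜) (B₁ : Matrix m n₁ 𝕜)
    (B₂ : Matrix m n₂ 𝕜) {D₁ : Matrix n₁ n₁ 𝕜} {D₂ : Matrix n₂ n₂ 𝕜}
    (h₁ : D₁.PosDef) (h₂ : D₂.PosDef) :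
    (fromBlocks A (fromCols B₁ B₂) (fromCols B₁ B₂)ᴴ (fromBlocks D₁ 0 0 D₂)).PosSemidef ↔
      (A - B₁ * D₁⁻¹ * B₁ᴴ - B₂ * D₂⁻¹ * B₂ᴴ).PosSemidef := by
  have hD := h₁.fromBlocks_zero_zero h₂
  have : Invertible (fromBlocks D₁ 0 0 D₂) := hD.isUnit.invertible
  rw [PosDef.fromBlocks₂₂ A _ hD, h₁.inv_fromBlocks_zero_zero h₂,
    conjTranspose_fromCols_eq_fromRows_conjTranspose, fromCols_mul_fromBlocks,
    fromCols_mul_fromRows, sub_add_eq_sub_sub]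
  simp

theorem PosDef.posSemidef_fromBlocks_one_one_iff {S M : Matrix n₁ n₁ 𝕜} (hS : S.PosDef) :
    (fromBlocks S 1 1 M).PosSemidef ↔ (M - S⁻¹).PosSemidef := by
  have := hS.isUnit.invertible
  simpa using PosDef.fromBlocks₁₁ (1 : Matrix n₁ n₁ 𝕜) M hS

end Blocks

theorem inv_add_inv_eq_sub {K m : Type*} [Field K] [Fintype m] [DecidableEq m]
    {R Y : Matrix m m K} (hR : IsUnit R) (hY : IsUnit Y) (hYR : IsUnit (Y + R⁻¹)) :
    (R + Y⁻¹)⁻¹ = R⁻¹ - R⁻¹ * (Y + R⁻¹)⁻¹ * R⁻¹ := by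
  have hYY : Y⁻¹⁻¹ = Y := nonsing_inv_nonsing_inv _ ((isUnit_iff_isUnit_det Y).1 hY)
  simpa [hYY] using
    add_mul_mul_inv_eq_sub R 1 Y⁻¹ 1 hR (isUnit_nonsing_inv_iff.2 hY) (by simpa [hYY] using hYR)

end Matrix

section Riccati

variable {n m : ℕ}

theorem gRic_eq_add_inv (A Q : Matrix (Fin n) (Fin n) ℝ) (C : Matrix (Fin m) (Fin n) ℝ)
    {W : Matrix (Fin m) (Fin m) ℝ} {X : Matrix (Fin n) (Fin n) ℝ} (θ : ℝ) (hW : W.PosDef)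
    (hX : X.PosDef) :
    gRic A Q C W θ X = Q + θ • (A * (X⁻¹ + Cᵀ * W⁻¹ * C)⁻¹ * Aᵀ) + (1 - θ) • (A * X * Aᵀ) := by
  have hV : (W + C * X * Cᵀ).PosDef := by
    simpa using hW.add_posSemidef (hX.posSemidef.mul_mul_conjTranspose_same C)
  have hXX : X⁻¹⁻¹ = X := nonsing_inv_nonsing_inv _ hX.det_pos.ne'.isUnit
  have hWW : W⁻¹⁻¹ = W := nonsing_inv_nonsing_inv _ hW.det_pos.ne'.isUnit
  have hWoodbury : (X⁻¹ + Cᵀ * W⁻¹ * C)⁻¹ = X - X * Cᵀ * (C * X * Cᵀ + W)⁻¹ * C * X := by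
    rw [add_mul_mul_inv_eq_sub _ _ _ _ hX.inv.isUnit hW.inv.isUnit
      (by rw [hXX, hWW]; exact hV.isUnit), hXX, hWW, add_comm W]
  rw [gRic, hWoodbury]
  simp only [Matrix.mul_sub, Matrix.sub_mul, Matrix.mul_assoc]
  module

def psiReindex (n m : ℕ) :
    (Fin n ⊕ (Fin n ⊕ Fin n)) ⊕ (Fin n ⊕ Fin m) ≃ Fin n ⊕ (Fin n ⊕ (Fin n ⊕ (Fin n ⊕ Fin m))) :=
  (Equiv.sumAssoc _ _ _).trans (Equiv.sumCongr (Equiv.refl _) (Equiv.sumAssoc _ _ _))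

theorem Psi_submatrix_psiReindex (A Q : Matrix (Fin n) (Fin n) ℝ) (C : Matrix (Fin m) (Fin n) ℝ)
    (R : Matrix (Fin m) (Fin m) ℝ) (lam : ℝ) (S : Matrix (Fin n) (Fin n) ℝ)
    (Y : Matrix (Fin m) (Fin m) ℝ) :
    (Psi A Q C R lam S Y).submatrix (psiReindex n m) (psiReindex n m) =
      fromBlocks
        (fromBlocks S (fromCols (√lam • (S * A)) (√(1 - lam) • (S * A)))
          (fromRows (√lam • (Aᵀ * S)) (√(1 - lam) • (Aᵀ * S)))
          (fromBlocks (S + Cᵀ * R⁻¹ * C) 0 0 S))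
        (fromCols (fromRows S 0) (fromRows 0 (fromRows (Cᵀ * R⁻¹) 0)))
        (fromRows (fromCols S 0) (fromCols 0 (fromCols (R⁻¹ * C) 0)))
        (fromBlocks Q⁻¹ 0 0 (Y + R⁻¹)) := by
  ext ((i | i | i) | (i | i)) ((j | j | j) | (j | j)) <;> rfl

theorem posSemidef_Psi_iff_fromBlocks {A Q : Matrix (Fin n) (Fin n) ℝ}
    {C : Matrix (Fin m) (Fin n) ℝ} {R Y : Matrix (Fin m) (Fin m) ℝ} {lam : ℝ}
    {S : Matrix (Fin n) (Fin n) ℝ} (hQ : Q.PosDef) (hR : R.PosDef) (hY : Y.PosDef)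
    (hS : S.IsHermitian) :
    (Psi A Q C R lam S Y).PosSemidef ↔
      (fromBlocks (S - S * Q * S) (fromCols (√lam • (S * A)) (√(1 - lam) • (S * A)))
        (fromCols (√lam • (S * A)) (√(1 - lam) • (S * A)))ᴴ
        (fromBlocks (S + Cᵀ * (R + Y⁻¹)⁻¹ * C) 0 0 S)).PosSemidef := by
  have hSA : (S * A)ᴴ = Aᵀ * S := by
    rw [conjTranspose_mul, hS.eq, conjTranspose_eq_transpose_of_trivial]
  have hCR : (Cᵀ * R⁻¹)ᴴ = R⁻¹ * C := by
    rw [conjTranspose_mul, hR.inv.1.eq, conjTranspose_eq_transpose_of_trivial, transpose_transpose]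
  have hP : fromRows (√lam • (Aᵀ * S)) (√(1 - lam) • (Aᵀ * S)) =
      (fromCols (√lam • (S * A)) (√(1 - lam) • (S * A)))ᴴ := by
    simp only [conjTranspose_fromCols_eq_fromRows_conjTranspose, conjTranspose_smul, hSA,
      star_trivial]
  have hB : fromRows (fromCols S 0) (fromCols 0 (fromCols (R⁻¹ * C) 0)) =
      (fromCols (fromRows S 0)
        (fromRows 0 (fromRows (Cᵀ * R⁻¹) (0 : Matrix (Fin n) (Fin m) ℝ))))ᴴ := by
    simp only [conjTranspose_fromCols_eq_fromRows_conjTranspose,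
      conjTranspose_fromRows_eq_fromCols_conjTranspose, conjTranspose_zero, hS.eq, hCR]
  have hWoodbury :
      Cᵀ * (R + Y⁻¹)⁻¹ * C = Cᵀ * R⁻¹ * C - Cᵀ * R⁻¹ * (Y + R⁻¹)⁻¹ * (R⁻¹ * C) := by
    rw [inv_add_inv_eq_sub hR.isUnit hY.isUnit (hY.add hR.inv).isUnit]
    simp only [Matrix.mul_sub, Matrix.sub_mul, Matrix.mul_assoc]
  rw [← posSemidef_submatrix_equiv (psiReindex n m), Psi_submatrix_psiReindex, hP, hB,
    posSemidef_fromBlocks_fromCols_iff _ _ _ hQ.inv (hY.add hR.inv),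
    nonsing_inv_nonsing_inv _ hQ.det_pos.ne'.isUnit, hWoodbury]
  congr! 1
  simp only [conjTranspose_fromRows_eq_fromCols_conjTranspose, conjTranspose_zero, hS.eq, hCR,
    fromRows_mul]
  ext (i | i | i) (j | j | j) <;> simp [Matrix.mul_assoc, add_sub_assoc]

theorem posSemidef_Psi_iff {A Q : Matrix (Fin n) (Fin n) ℝ} {C : Matrix (Fin m) (Fin n) ℝ}
    {R Y : Matrix (Fin m) (Fin m) ℝ} {lam : ℝ} {S : Matrix (Fin n) (Fin n) ℝ}
    (hQ : Q.PosDef) (hR : R.PosDef) (hY : Y.PosDef) (hlam₀ : 0 ≤ lam) (hlam₁ : lam ≤ 1)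
    (hS : S.PosDef) :
    (Psi A Q C R lam S Y).PosSemidef ↔ (S⁻¹ - gRic A Q C (R + Y⁻¹) lam S⁻¹).PosSemidef := by
  have hSdet : IsUnit S.det := hS.det_pos.ne'.isUnit
  have hW : (R + Y⁻¹).PosDef := hR.add hY.inv
  have hG : (S + Cᵀ * (R + Y⁻¹)⁻¹ * C).PosDef := by
    simpa using hS.add_posSemidef (hW.inv.posSemidef.conjTranspose_mul_mul_same C)
  have hSA : (S * A)ᴴ = Aᵀ * S := by
    rw [conjTranspose_mul, hS.1.eq, conjTranspose_eq_transpose_of_trivial]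
  rw [posSemidef_Psi_iff_fromBlocks hQ hR hY hS.1, posSemidef_fromBlocks_fromCols_iff _ _ _ hG hS,
    ← (isUnit_nonsing_inv_iff.2 hS.isUnit).posSemidef_star_right_conjugate_iff,
    gRic_eq_add_inv A Q C lam hW hS.inv, nonsing_inv_nonsing_inv _ hSdet]
  congr! 1
  rw [star_eq_conjTranspose, hS.inv.1.eq, conjTranspose_smul, conjTranspose_smul, hSA,
    star_trivial, star_trivial]
  simp only [Matrix.smul_mul, Matrix.mul_smul, smul_smul, Real.mul_self_sqrt hlam₀,
    Real.mul_self_sqrt (sub_nonneg.2 hlam₁), Matrix.mul_sub, Matrix.sub_mul, Matrix.mul_assoc,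
    nonsing_inv_mul_cancel_left _ _ hSdet, mul_nonsing_inv _ hSdet, nonsing_inv_mul _ hSdet,
    Matrix.mul_one, Matrix.one_mul]
  module

end Riccati

theorem sdp_feasibility_equiv_general {n m : ℕ}
    (A : Matrix (Fin n) (Fin n) ℝ) (Q : Matrix (Fin n) (Fin n) ℝ)
    (C : Matrix (Fin m) (Fin n) ℝ) (R : Matrix (Fin m) (Fin m) ℝ)
    (M : Matrix (Fin n) (Fin n) ℝ) (Y : Matrix (Fin m) (Fin m) ℝ) (lam : ℝ)
    (hQ : Q.PosDef) (hR : R.PosDef) (hY : Y.PosDef)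
    (hlam : lam ∈ Set.Ioc (0 : ℝ) 1) :
    (∃ X : Matrix (Fin n) (Fin n) ℝ, X.PosDef ∧ (M - X).PosSemidef ∧
        (X - gRic A Q C (R + Y⁻¹) lam X).PosSemidef) ↔
      (∃ S : Matrix (Fin n) (Fin n) ℝ, S.PosDef ∧
        (Psi A Q C R lam S Y).PosSemidef ∧
        (Matrix.fromBlocks S (1 : Matrix (Fin n) (Fin n) ℝ)
          (1 : Matrix (Fin n) (Fin n) ℝ) M).PosSemidef) := by
  obtain ⟨hlam₀, hlam₁⟩ := hlam
  constructor
  · rintro ⟨X, hX, hMX, hg⟩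
    have hXX : X⁻¹⁻¹ = X := nonsing_inv_nonsing_inv _ hX.det_pos.ne'.isUnit
    refine ⟨X⁻¹, hX.inv, ?_, ?_⟩
    · rwa [posSemidef_Psi_iff hQ hR hY hlam₀.le hlam₁ hX.inv, hXX]
    · rwa [hX.inv.posSemidef_fromBlocks_one_one_iff, hXX]
  · rintro ⟨S, hS, hPsi, hBlock⟩
    exact ⟨S⁻¹, hS.inv, hS.posSemidef_fromBlocks_one_one_iff.1 hBlock,
      (posSemidef_Psi_iff hQ hR hY hlam₀.le hlam₁ hS).1 hPsi⟩

/-- Core feasibility equivalence of Theorem 2 (Appendix D): there exists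
`0 < X ≤ M` with `g_{λ,R+Y⁻¹}(X) ≤ X` iff there exists `S > 0` with
`Ψ(S,Y) ≥ 0` and `[[S, I],[I, M]] ≥ 0`. -/
theorem sdp_feasibility_equiv {n m : ℕ}
    (A : Matrix (Fin n) (Fin n) ℝ) (Q : Matrix (Fin n) (Fin n) ℝ)
    (C : Matrix (Fin m) (Fin n) ℝ) (R : Matrix (Fin m) (Fin m) ℝ)
    (M : Matrix (Fin n) (Fin n) ℝ) (Y : Matrix (Fin m) (Fin m) ℝ) (lam : ℝ)
    (hQ : Q.PosDef) (hR : R.PosDef) (hM : M.PosDef) (hY : Y.PosDef)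
    (hlam : lam ∈ Set.Ioc (0 : ℝ) 1) :
    (∃ X : Matrix (Fin n) (Fin n) ℝ, X.PosDef ∧ (M - X).PosSemidef ∧
        (X - gRic A Q C (R + Y⁻¹) lam X).PosSemidef) ↔
      (∃ S : Matrix (Fin n) (Fin n) ℝ, S.PosDef ∧
        (Psi A Q C R lam S Y).PosSemidef ∧
        (Matrix.fromBlocks S (1 : Matrix (Fin n) (Fin n) ℝ)
          (1 : Matrix (Fin n) (Fin n) ℝ) M).PosSemidef) :=
  sdp_feasibility_equiv_general A Q C R M Y lam hQ hR hY hlam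
end
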